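/- Let f : ℝⁿ → ℝ be α-strongly convex and differentiable with β-Lipschitz gradient, with unique minimizer x*. Then the gradient descent iterates x^{k+1} = x^k - (1/β)∇f(x^k) satisfy ‖x^k - x*‖² ≤ (1 - α/β)^{k-1}‖x¹ - x*‖². -/

import Mathlib

open Set InnerProductSpace

local notation "⟪" x ", " y "⟫" => @inner ℝ _ _ x y

section aux

variable {n : ℕ}
local notation "E" => EuclideanSpace ℝ (Fin n)

/-- derivative along a line -/
lemma gd_line_hasDerivAt {f : E → ℝ} {f' : E → E}
    (hdiff : ∀ p, HasGradientAt f (f' p) p) (x d : E) (t : ℝ) :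
    HasDerivAt (fun s : ℝ => f (x + s • d)) ⟪f' (x + t • d), d⟫ t := by
  have h1 : HasDerivAt (fun s : ℝ => x + s • d) d t := by
    simpa using ((hasDerivAt_id t).smul_const d).const_add x
  have h2 := (hdiff (x + t • d)).hasFDerivAt.comp_hasDerivAt t h1
  simp [toDual_apply_apply] at h2
  exact h2

/-- first-order condition for a differentiable convex function -/
lemma gd_first_order {g : E → ℝ} {G : E → E}
    (hconv : ConvexOn ℝ univ g) (hdiff : ∀ p, HasGradientAt g (G p) p) (x y : E) :
    g x + ⟪G x, y - x⟫ ≤ g y := by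
  have hφconv : ConvexOn ℝ univ (fun s : ℝ => g (x + s • (y - x))) := by
    have := hconv.comp_affineMap (AffineMap.lineMap x y : ℝ →ᵃ[ℝ] E)
    have heq : (g ∘ (AffineMap.lineMap x y : ℝ →ᵃ[ℝ] E))
        = fun s : ℝ => g (x + s • (y - x)) := by
      funext s
      simp [AffineMap.lineMap_apply, add_comm]
    rw [heq] at this
    simpa using this
  have hder : HasDerivAt (fun s : ℝ => g (x + s • (y - x))) ⟪G x, y - x⟫ 0 := by
    have := gd_line_hasDerivAt hdiff x (y - x) 0
    simpa using this
  have := hφconv.le_slope_of_hasDerivAt (mem_univ (0:ℝ)) (mem_univ (1:ℝ)) one_pos hder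
  rw [slope_def_field] at this
  simp only [one_smul, zero_smul, add_zero, sub_zero, div_one] at this
  have hx1 : x + (y - x) = y := by abel
  rw [hx1] at this
  linarith

/-- descent lemma from Lipschitz gradient -/
lemma gd_descent {f : E → ℝ} {f' : E → E} {β : ℝ} (hβ : 0 < β)
    (hdiff : ∀ p, HasGradientAt f (f' p) p)
    (hlip : ∀ p q, ‖f' p - f' q‖ ≤ β * ‖p - q‖) (x y : E) :
    f y ≤ f x + ⟪f' x, y - x⟫ + β / 2 * ‖y - x‖ ^ 2 := by
  set d := y - x with hd
  set g : ℝ → ℝ := fun t => β / 2 * ‖d‖ ^ 2 * t ^ 2 + t * ⟪f' x, d⟫ + f x - f (x + t • d)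
    with hg
  have hgder : ∀ t : ℝ,
      HasDerivAt g (β / 2 * ‖d‖ ^ 2 * (2 * t) + ⟪f' x, d⟫ - ⟪f' (x + t • d), d⟫) t := by
    intro t
    have h1 : HasDerivAt (fun t : ℝ => β / 2 * ‖d‖ ^ 2 * t ^ 2 + t * ⟪f' x, d⟫ + f x)
        (β / 2 * ‖d‖ ^ 2 * (2 * t) + ⟪f' x, d⟫) t := by
      have ha := (hasDerivAt_pow 2 t).const_mul (β / 2 * ‖d‖ ^ 2)
      have hb := (hasDerivAt_id t).mul_const ⟪f' x, d⟫
      simpa using (ha.add hb).add_const (f x)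
    exact h1.sub (gd_line_hasDerivAt hdiff x d t)
  have hmono : MonotoneOn g (Icc (0:ℝ) 1) := by
    apply monotoneOn_of_deriv_nonneg (convex_Icc 0 1)
    · exact fun t _ => (hgder t).continuousAt.continuousWithinAt
    · exact fun t _ => ((hgder t).differentiableAt).differentiableWithinAt
    · intro t ht
      rw [interior_Icc] at ht
      rw [(hgder t).deriv]
      have h2 : ⟪f' (x + t • d), d⟫ - ⟪f' x, d⟫ = ⟪f' (x + t • d) - f' x, d⟫ := by
        rw [inner_sub_left]
      have h3 : ⟪f' (x + t • d) - f' x, d⟫ ≤ ‖f' (x + t • d) - f' x‖ * ‖d‖ :=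
        real_inner_le_norm _ _
      have h4 : ‖f' (x + t • d) - f' x‖ ≤ β * (t * ‖d‖) := by
        have := hlip (x + t • d) x
        simpa [norm_smul, abs_of_pos ht.1] using this
      have h5 : ‖f' (x + t • d) - f' x‖ * ‖d‖ ≤ β * (t * ‖d‖) * ‖d‖ :=
        mul_le_mul_of_nonneg_right h4 (norm_nonneg _)
      nlinarith [norm_nonneg d]
  have h01 := hmono (left_mem_Icc.2 zero_le_one) (right_mem_Icc.2 zero_le_one) zero_le_one
  have hg0 : g 0 = 0 := by simp [hg]
  have hg1 : g 1 = β / 2 * ‖d‖ ^ 2 + ⟪f' x, d⟫ + f x - f y := by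
    have : x + (1:ℝ) • d = y := by rw [one_smul, hd]; abel
    simp only [hg]
    rw [this]
    ring
  rw [hg0, hg1] at h01
  linarith

/-- gradient of `f z - ⟪c, z⟫` -/
lemma gd_grad_sub_linear {f : E → ℝ} {f' : E → E}
    (hdiff : ∀ p, HasGradientAt f (f' p) p) (c : E) (z : E) :
    HasGradientAt (fun w => f w - ⟪c, w⟫) (f' z - c) z := by
  have h1 : HasFDerivAt (fun w => f w - ⟪c, w⟫)
      ((toDual ℝ E) (f' z) - (toDual ℝ E) c) z := by
    exact (hdiff z).hasFDerivAt.sub ((toDual ℝ E c).hasFDerivAt)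
  rw [← map_sub] at h1
  simpa using h1.hasGradientAt

/-- cocoercivity -/
lemma gd_coco {f : E → ℝ} {f' : E → E} {β : ℝ} (hβ : 0 < β)
    (hconv : ConvexOn ℝ univ f)
    (hdiff : ∀ p, HasGradientAt f (f' p) p)
    (hlip : ∀ p q, ‖f' p - f' q‖ ≤ β * ‖p - q‖) (w y : E) :
    (1 / β) * ‖f' w - f' y‖ ^ 2 ≤ ⟪f' w - f' y, w - y⟫ := by
  have key : ∀ w y : E,
      f w - ⟪f' w, w⟫ ≤ f y - ⟪f' w, y⟫ - 1 / (2 * β) * ‖f' y - f' w‖ ^ 2 := by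
    intro w y
    set φ : E → ℝ := fun z => f z - ⟪f' w, z⟫ with hφ
    set φ' : E → E := fun z => f' z - f' w with hφ'
    have hφdiff : ∀ p, HasGradientAt φ (φ' p) p := fun p => gd_grad_sub_linear hdiff _ p
    have hφlip : ∀ p q, ‖φ' p - φ' q‖ ≤ β * ‖p - q‖ := by
      intro p q
      simpa [hφ', sub_sub_sub_cancel_right] using hlip p q
    set g : E := f' y - f' w with hgdef
    have hdesc := gd_descent hβ hφdiff hφlip y (y - (1 / β) • g)
    have hmin : φ w ≤ φ (y - (1 / β) • g) := by
      have h1 := gd_first_order hconv hdiff w (y - (1 / β) • g)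
      simp only [hφ]
      have h2 : ⟪f' w, (y - (1 / β) • g) - w⟫
          = ⟪f' w, y - (1 / β) • g⟫ - ⟪f' w, w⟫ := by rw [inner_sub_right]
      linarith
    have h3 : (y - (1 / β) • g) - y = -((1 / β) • g) := by abel
    rw [h3] at hdesc
    have h4 : ⟪φ' y, -((1 / β) • g)⟫ = -((1 / β) * ‖g‖ ^ 2) := by
      rw [inner_neg_right, real_inner_smul_right]
      have : ⟪φ' y, g⟫ = ‖g‖ ^ 2 := by
        rw [hφ', hgdef, real_inner_self_eq_norm_sq]
      rw [this]
    have h5 : ‖-((1 / β) • g)‖ ^ 2 = (1 / β) ^ 2 * ‖g‖ ^ 2 := by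
      rw [norm_neg, norm_smul]
      rw [Real.norm_eq_abs, abs_of_pos (by positivity : (0:ℝ) < 1 / β)]
      ring
    rw [h4, h5] at hdesc
    have h6 := le_trans hmin hdesc
    have hφy : φ y = f y - ⟪f' w, y⟫ := rfl
    have hφw : φ w = f w - ⟪f' w, w⟫ := rfl
    rw [hφy, hφw] at h6
    have hb2 : β / 2 * ((1 / β) ^ 2 * ‖g‖ ^ 2) - (1 / β) * ‖g‖ ^ 2
        = -(1 / (2 * β) * ‖g‖ ^ 2) := by field_simp; ring
    nlinarith [h6]
  have h1 := key w y
  have h2 := key y w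
  have h3 : ‖f' w - f' y‖ = ‖f' y - f' w‖ := norm_sub_rev _ _
  have h4 : ⟪f' w - f' y, w - y⟫
      = ⟪f' w, w⟫ - ⟪f' w, y⟫ - ⟪f' y, w⟫ + ⟪f' y, y⟫ := by
    rw [inner_sub_left, inner_sub_right, inner_sub_right]; ring
  have hβ' : 0 < 1 / (2 * β) := by positivity
  rw [h3] at h2
  have h5 : 1 / (2 * β) * ‖f' y - f' w‖ ^ 2 + 1 / (2 * β) * ‖f' y - f' w‖ ^ 2
      = 1 / β * ‖f' y - f' w‖ ^ 2 := by field_simp; ring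
  rw [h3, h4]
  linarith

end aux

set_option maxHeartbeats 1000000 in
theorem gradient_descent_strongly_convex_rate {n : ℕ}
    (f : EuclideanSpace ℝ (Fin n) → ℝ)
    (f' : EuclideanSpace ℝ (Fin n) → EuclideanSpace ℝ (Fin n))
    (α β : ℝ) (hα : 0 < α) (hαβ : α ≤ β)
    (hsc : ConvexOn ℝ Set.univ (fun z => f z - α / 2 * ‖z‖ ^ 2))
    (hdiff : ∀ x, HasGradientAt f (f' x) x)
    (hlip : ∀ x y, ‖f' x - f' y‖ ≤ β * ‖x - y‖)
    (xstar : EuclideanSpace ℝ (Fin n)) (hmin : ∀ y, f xstar ≤ f y)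
    (huniq : ∀ y, (∀ z, f y ≤ f z) → y = xstar)
    (x : ℕ → EuclideanSpace ℝ (Fin n))
    (hiter : ∀ k, x (k + 1) = x k - (1 / β) • f' (x k)) :
    ∀ k : ℕ, 1 ≤ k →
      ‖x k - xstar‖ ^ 2 ≤ (1 - α / β) ^ (k - 1) * ‖x 1 - xstar‖ ^ 2 := by
  have hβ : 0 < β := lt_of_lt_of_le hα hαβ
  -- convexity of the quadratic
  have hq : ConvexOn ℝ univ (fun z : EuclideanSpace ℝ (Fin n) => α / 2 * ‖z‖ ^ 2) := by
    refine ⟨convex_univ, ?_⟩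
    intro p _ q _ a b ha hb hab
    have expand : ‖a • p + b • q‖ ^ 2
        = a ^ 2 * ‖p‖ ^ 2 + 2 * (a * b) * ⟪p, q⟫_ℝ + b ^ 2 * ‖q‖ ^ 2 := by
      rw [norm_add_sq_real, real_inner_smul_left, real_inner_smul_right, norm_smul, norm_smul,
        Real.norm_eq_abs, Real.norm_eq_abs, abs_of_nonneg ha, abs_of_nonneg hb]
      ring
    have hinner : ⟪p, q⟫_ℝ ≤ ‖p‖ * ‖q‖ := real_inner_le_norm p q
    have hkey : ‖a • p + b • q‖ ^ 2 ≤ a * ‖p‖ ^ 2 + b * ‖q‖ ^ 2 := by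
      nlinarith [mul_nonneg (mul_nonneg ha hb) (sq_nonneg (‖p‖ - ‖q‖)),
        mul_nonneg (mul_nonneg ha hb) (sub_nonneg.2 hinner)]
    simp only [smul_eq_mul]
    nlinarith [mul_le_mul_of_nonneg_left hkey (by positivity : (0:ℝ) ≤ α / 2)]
  -- convexity of f
  have hconvf : ConvexOn ℝ univ f := by
    have h1 := hsc.add hq
    have heq : ((fun z : EuclideanSpace ℝ (Fin n) => f z - α / 2 * ‖z‖ ^ 2) + fun z => α / 2 * ‖z‖ ^ 2) = f := by
      funext z; simp
    rwa [heq] at h1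
  -- gradient of the strongly-convex part
  have hGdiff : ∀ z : EuclideanSpace ℝ (Fin n), HasGradientAt (fun w => f w - α / 2 * ‖w‖ ^ 2) (f' z - α • z) z := by
    intro z
    have hq1 : HasFDerivAt (fun w : EuclideanSpace ℝ (Fin n) => α / 2 * ‖w‖ ^ 2)
        ((α / 2) • (2 • innerSL ℝ z)) z :=
      ((hasStrictFDerivAt_norm_sq z).hasFDerivAt).const_mul (α / 2)
    have hG : HasFDerivAt (fun w => f w - α / 2 * ‖w‖ ^ 2)
        ((toDual ℝ (EuclideanSpace ℝ (Fin n))) (f' z) - (α / 2) • (2 • innerSL ℝ z)) z :=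
      (hdiff z).hasFDerivAt.sub hq1
    have heq : (toDual ℝ (EuclideanSpace ℝ (Fin n))) (f' z) - (α / 2) • (2 • innerSL ℝ z)
        = (toDual ℝ (EuclideanSpace ℝ (Fin n))) (f' z - α • z) := by
      apply ContinuousLinearMap.ext
      intro w
      simp only [ContinuousLinearMap.sub_apply, ContinuousLinearMap.smul_apply,
        toDual_apply_apply, innerSL_apply_apply, inner_sub_left, real_inner_smul_left]
      simp [two_smul]
      ring
    rw [heq] at hG
    simpa using hG.hasGradientAt
  -- gradient at the minimizer is zero
  have hstar : f' xstar = 0 := by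
    have hloc : IsLocalMin f xstar := Filter.Eventually.of_forall hmin
    have h0 := hloc.hasFDerivAt_eq_zero (hdiff xstar).hasFDerivAt
    apply (toDual ℝ (EuclideanSpace ℝ (Fin n))).injective
    simp [h0]
  -- strong monotonicity
  have hmono : ∀ p q : EuclideanSpace ℝ (Fin n), α * ‖p - q‖ ^ 2 ≤ ⟪f' p - f' q, p - q⟫_ℝ := by
    intro p q
    have h1 := gd_first_order hsc hGdiff p q
    have h2 := gd_first_order hsc hGdiff q p
    have h3 : ⟪f' q - α • q, p - q⟫_ℝ = -⟪f' q - α • q, q - p⟫_ℝ := by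
      rw [← inner_neg_right]; congr 1; abel
    have h4 : ⟪f' p - α • p, q - p⟫_ℝ = -⟪f' p - α • p, p - q⟫_ℝ := by
      rw [← inner_neg_right]; congr 1; abel
    have h5 : ⟪(f' p - α • p) - (f' q - α • q), p - q⟫_ℝ
        = ⟪f' p - α • p, p - q⟫_ℝ - ⟪f' q - α • q, p - q⟫_ℝ := inner_sub_left _ _ _
    have h6 : (0:ℝ) ≤ ⟪(f' p - α • p) - (f' q - α • q), p - q⟫_ℝ := by
      rw [h5]; rw [h3] at h2 ⊢ <;> linarith [h1, h2]
    have h7 : (f' p - α • p) - (f' q - α • q) = (f' p - f' q) - α • (p - q) := by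
      rw [smul_sub]; abel
    rw [h7, inner_sub_left, real_inner_smul_left, real_inner_self_eq_norm_sq] at h6
    linarith
  -- one-step contraction
  have hstep : ∀ k : ℕ, ‖x (k + 1) - xstar‖ ^ 2 ≤ (1 - α / β) * ‖x k - xstar‖ ^ 2 := by
    intro k
    set h := x k - xstar with hh
    set g := f' (x k) with hgd
    have hx1 : x (k + 1) - xstar = h - (1 / β) • g := by rw [hiter k, hh, hgd]; abel
    have hm : α * ‖h‖ ^ 2 ≤ ⟪g, h⟫_ℝ := by
      have := hmono (x k) xstar
      simpa [hstar] using this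
    have hc : (1 / β) * ‖g‖ ^ 2 ≤ ⟪g, h⟫_ℝ := by
      have := gd_coco hβ hconvf hdiff hlip (x k) xstar
      simpa [hstar] using this
    have hb1 : (0:ℝ) < 1 / β := by positivity
    rw [hx1, norm_sub_sq_real]
    have i1 : ⟪h, (1 / β) • g⟫_ℝ = (1 / β) * ⟪g, h⟫_ℝ := by
      rw [real_inner_smul_right, real_inner_comm]
    have i2 : ‖(1 / β) • g‖ ^ 2 = (1 / β) ^ 2 * ‖g‖ ^ 2 := by
      rw [norm_smul, Real.norm_eq_abs, abs_of_pos hb1, mul_pow]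
    rw [i1, i2]
    have key : β ^ 2 * ‖h‖ ^ 2 - 2 * β * ⟪g, h⟫_ℝ + ‖g‖ ^ 2
        ≤ (β ^ 2 - α * β) * ‖h‖ ^ 2 := by
      have e1 : α * ‖h‖ ^ 2 * β ≤ ⟪g, h⟫_ℝ * β := mul_le_mul_of_nonneg_right hm hβ.le
      have e2 : (1 / β) * ‖g‖ ^ 2 * β ≤ ⟪g, h⟫_ℝ * β := mul_le_mul_of_nonneg_right hc hβ.le
      have e3 : (1 / β) * ‖g‖ ^ 2 * β = ‖g‖ ^ 2 := by field_simp
      nlinarith [e1, e2]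
    have goal_eq : ‖h‖ ^ 2 - 2 * ((1 / β) * ⟪g, h⟫_ℝ) + (1 / β) ^ 2 * ‖g‖ ^ 2
        = (β ^ 2 * ‖h‖ ^ 2 - 2 * β * ⟪g, h⟫_ℝ + ‖g‖ ^ 2) / β ^ 2 := by
      field_simp
    have rhs_eq : (1 - α / β) * ‖h‖ ^ 2 = ((β ^ 2 - α * β) * ‖h‖ ^ 2) / β ^ 2 := by
      field_simp
    rw [goal_eq, rhs_eq]
    exact (div_le_div_iff_of_pos_right (by positivity)).mpr key
  have hfac : (0:ℝ) ≤ 1 - α / β := by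
    rw [sub_nonneg]
    exact div_le_one_of_le₀ hαβ hβ.le
  have main : ∀ m : ℕ, ‖x (m + 1) - xstar‖ ^ 2 ≤ (1 - α / β) ^ m * ‖x 1 - xstar‖ ^ 2 := by
    intro m
    induction m with
    | zero => simp
    | succ m ih =>
      calc ‖x (m + 1 + 1) - xstar‖ ^ 2 ≤ (1 - α / β) * ‖x (m + 1) - xstar‖ ^ 2 := hstep (m + 1)
        _ ≤ (1 - α / β) * ((1 - α / β) ^ m * ‖x 1 - xstar‖ ^ 2) :=
            mul_le_mul_of_nonneg_left ih hfac
        _ = (1 - α / β) ^ (m + 1) * ‖x 1 - xstar‖ ^ 2 := by ring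
  intro k hk
  obtain ⟨m, rfl⟩ := Nat.exists_eq_add_of_le hk
  have h1 : 1 + m - 1 = m := by omega
  have h2 : 1 + m = m + 1 := by omega
  rw [h1, h2]
  exact main m
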